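/- arXiv:2107.05411 — 5 statements merged into one kernel-verified Lean document; each statement's English description precedes it below -/
import Mathlib

section
/- Let ℓ, t, k be natural numbers with k ≥ 2 and 2^ℓ ≥ 2^k. Let h be a uniform random function from Fin(2^ℓ) × Fin(2^t) to Fin(2^k), and fix r ∈ Fin(2^t). Set L = (5·ln(2^k)/ln(ln(2^k)))·(2^ℓ/2^k) (a real number). Then the probability (over the uniform choice of h) that there exists y ∈ Fin(2^k) such that the number of m ∈ Fin(2^ℓ) with h(m, r) = y exceeds L is strictly less than 1/(2^k)². -/
/-- The probability, under the uniform distribution on a finite type `α`,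
of the event `P`. -/
noncomputable def unifPr {α : Type*} [Fintype α] (P : α → Prop) : ℝ :=
  (Nat.card {a : α // P a} : ℝ) / Fintype.card α

open Finset
set_option maxHeartbeats 2000000


lemma card_fixed {D Y : Type*} [Fintype D] [DecidableEq D] [Fintype Y]
    (T : Finset D) (g : D → Y) :
    Nat.card {h : D → Y // ∀ d ∈ T, h d = g d} =
      Fintype.card Y ^ (Fintype.card D - T.card) := by
  classical
  have e : {h : D → Y // ∀ d ∈ T, h d = g d} ≃ ({d : D // d ∉ T} → Y) :=
    { toFun := fun h d => h.1 d.1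
      invFun := fun f => ⟨fun d => if hd : d ∈ T then g d else f ⟨d, hd⟩, by
        intro d hd; simp [hd]⟩
      left_inv := by
        rintro ⟨h, hh⟩
        ext d
        by_cases hd : d ∈ T <;> simp [hd, hh d]
      right_inv := by
        intro f
        funext d
        simp [d.2] }
  rw [Nat.card_congr e, Nat.card_eq_fintype_card, Fintype.card_fun]
  congr 1
  rw [Fintype.card_subtype_compl, Fintype.card_coe]

lemma card_exists_le {α ι : Type*} [Fintype α] [Fintype ι] (P : ι → α → Prop) :
    Nat.card {a : α // ∃ i, P i a} ≤ ∑ i, Nat.card {a : α // P i a} := by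
  classical
  simp only [Nat.card_eq_fintype_card, Fintype.card_subtype]
  calc (univ.filter fun a => ∃ i, P i a).card
      ≤ (univ.biUnion fun i : ι => univ.filter fun a => P i a).card := by
        apply card_le_card
        intro a ha
        simp only [mem_filter, mem_univ, true_and] at ha
        obtain ⟨i, hi⟩ := ha
        exact mem_biUnion.2 ⟨i, mem_univ i, mem_filter.2 ⟨mem_univ a, hi⟩⟩
    _ ≤ ∑ i, (univ.filter fun a => P i a).card := card_biUnion_le

lemma card_tail_le {M R Y : Type*} [Fintype M] [Fintype R] [Fintype Y]
    [DecidableEq M] [DecidableEq R]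
    (r : R) (y : Y) (j : ℕ) :
    Nat.card {h : M × R → Y // j ≤ Nat.card {m : M // h (m, r) = y}} ≤
      (Fintype.card M).choose j *
        Fintype.card Y ^ (Fintype.card M * Fintype.card R - j) := by
  classical
  rw [Nat.card_eq_fintype_card, Fintype.card_subtype]
  have hcov : (univ.filter fun h : M × R → Y => j ≤ Nat.card {m : M // h (m, r) = y}) ⊆
      (powersetCard j (univ : Finset M)).biUnion
        (fun S => univ.filter fun h : M × R → Y => ∀ m ∈ S, h (m, r) = y) := by
    intro h hh
    simp only [mem_filter, mem_univ, true_and] at hh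
    rw [Nat.card_eq_fintype_card, Fintype.card_subtype] at hh
    obtain ⟨S, hS, hScard⟩ := Finset.exists_subset_card_eq hh
    refine mem_biUnion.2 ⟨S, mem_powersetCard.2 ⟨subset_univ S, hScard⟩, ?_⟩
    refine mem_filter.2 ⟨mem_univ h, fun m hm => ?_⟩
    have := hS hm
    simpa using (mem_filter.1 this).2
  calc (univ.filter fun h : M × R → Y => j ≤ Nat.card {m : M // h (m, r) = y}).card
      ≤ ((powersetCard j (univ : Finset M)).biUnion
        (fun S => univ.filter fun h : M × R → Y => ∀ m ∈ S, h (m, r) = y)).card :=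
        card_le_card hcov
    _ ≤ ∑ S ∈ powersetCard j (univ : Finset M),
        (univ.filter fun h : M × R → Y => ∀ m ∈ S, h (m, r) = y).card := card_biUnion_le
    _ ≤ ∑ _S ∈ powersetCard j (univ : Finset M),
        Fintype.card Y ^ (Fintype.card M * Fintype.card R - j) := by
        apply Finset.sum_le_sum
        intro S hS
        have hScard : S.card = j := (mem_powersetCard.1 hS).2
        have key := card_fixed (S.image fun m => ((m, r) : M × R)) (fun _ => y)
        rw [Nat.card_eq_fintype_card, Fintype.card_subtype] at key
        have hinj : Function.Injective (fun m : M => ((m, r) : M × R)) := by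
          intro a b hab
          simpa using congrArg Prod.fst hab
        rw [Finset.card_image_of_injective _ hinj, hScard] at key
        have : (univ.filter fun h : M × R → Y => ∀ m ∈ S, h (m, r) = y) =
            (univ.filter fun h : M × R → Y =>
              ∀ d ∈ S.image fun m => ((m, r) : M × R), h d = y) := by
          apply Finset.filter_congr
          intro h _
          simp
        rw [this, key, Fintype.card_prod]
    _ = (Fintype.card M).choose j *
        Fintype.card Y ^ (Fintype.card M * Fintype.card R - j) := by
        rw [Finset.sum_const, card_powersetCard, card_univ, smul_eq_mul]


lemma log_aux {u : ℝ} (hu : 2 * Real.log 2 ≤ u) :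
    0 < Real.log u ∧ Real.exp 1 * Real.log u ≤ u ∧
      3 * u < (5 * u / Real.log u) * (Real.log (5 * u / Real.log u) - 1) := by
  have hl2 : (0.6931471803 : ℝ) < Real.log 2 := Real.log_two_gt_d9
  have hu1 : 1 < u := by linarith
  have hu0 : 0 < u := by linarith
  have hx : 0 < Real.log u := Real.log_pos hu1
  set x := Real.log u with hxdef
  have he : (0:ℝ) < Real.exp 1 := Real.exp_pos 1
  -- exp 1 * log u ≤ u
  have h1 : Real.exp 1 * x ≤ u := by
    have := Real.log_le_sub_one_of_pos (show (0:ℝ) < u / Real.exp 1 by positivity)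
    rw [Real.log_div (ne_of_gt hu0) (ne_of_gt he), Real.log_exp] at this
    have : x ≤ u / Real.exp 1 := by linarith
    calc Real.exp 1 * x ≤ Real.exp 1 * (u / Real.exp 1) := by
          exact mul_le_mul_of_nonneg_left this (le_of_lt he)
      _ = u := by field_simp
  refine ⟨hx, h1, ?_⟩
  have hc0 : 0 < 5 * u / x := by positivity
  have hlogc : Real.log (5 * u / x) = Real.log 5 + x - Real.log x := by
    rw [Real.log_div (by positivity) (ne_of_gt hx), Real.log_mul (by norm_num) (ne_of_gt hu0)]
  -- log x ≤ 2x/5 - 1 + log (5/2)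
  have h2 : Real.log x ≤ 2 * x / 5 - 1 + Real.log (5 / 2) := by
    have := Real.log_le_sub_one_of_pos (show (0:ℝ) < x / (5/2) by positivity)
    rw [Real.log_div (ne_of_gt hx) (by norm_num)] at this
    have h52 : Real.log (5/2) = Real.log 5 - Real.log 2 := by
      rw [Real.log_div (by norm_num) (by norm_num)]
    linarith
  have h3 : Real.log (5 / 2) < Real.log 5 := by
    apply Real.log_lt_log (by norm_num) (by norm_num)
  -- 5 * (log 5 + x - log x - 1) > 3 * x
  have h4 : 3 * x < 5 * (Real.log 5 + x - Real.log x - 1) := by linarith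
  rw [hlogc]
  have key : (5 * u / x) * (Real.log 5 + x - Real.log x - 1)
      = (u / x) * (5 * (Real.log 5 + x - Real.log x - 1)) := by ring
  rw [key]
  have : (u / x) * (3 * x) < (u / x) * (5 * (Real.log 5 + x - Real.log x - 1)) :=
    mul_lt_mul_of_pos_left h4 (by positivity)
  have heq : (u / x) * (3 * x) = 3 * u := by field_simp
  linarith


/-- Balls-into-bins lemma, case `#M ≥ #Y`: for a uniform random function
`h : Fin (2^ℓ) × Fin (2^t) → Fin (2^k)` and a fixed prefix `r`, the probability that some
hash value `y` has more than `(5 ln(2^k)/ln ln(2^k)) · (2^ℓ/2^k)` preimages with prefix `r`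
is less than `1/(2^k)²`. -/
theorem ballsIntoBins_large (ℓ t k : ℕ) (hk : 2 ≤ k) (hMY : 2 ^ k ≤ 2 ^ ℓ)
    (r : Fin (2 ^ t)) :
    unifPr (fun h : Fin (2 ^ ℓ) × Fin (2 ^ t) → Fin (2 ^ k) =>
        ∃ y : Fin (2 ^ k),
          5 * Real.log (2 ^ k) / Real.log (Real.log (2 ^ k)) * ((2 : ℝ) ^ ℓ / 2 ^ k)
            < (Nat.card {m : Fin (2 ^ ℓ) // h (m, r) = y} : ℝ))
      < 1 / ((2 : ℝ) ^ k) ^ 2 := by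
  classical
  have hl2 : (0.6931471803 : ℝ) < Real.log 2 := Real.log_two_gt_d9
  set Yr : ℝ := (2:ℝ) ^ k with hYr_def
  set nr : ℝ := (2:ℝ) ^ ℓ with hnr_def
  have hYr0 : (0:ℝ) < Yr := by positivity
  have hnr0 : (0:ℝ) < nr := by positivity
  have hnY : Yr ≤ nr := by
    rw [hYr_def, hnr_def]
    exact_mod_cast hMY
  set u : ℝ := Real.log Yr with hu_def
  have hulog : u = (k:ℝ) * Real.log 2 := by rw [hu_def, hYr_def, Real.log_pow]
  have hu : 2 * Real.log 2 ≤ u := by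
    rw [hulog]
    have hk' : (2:ℝ) ≤ (k:ℝ) := by exact_mod_cast hk
    nlinarith
  obtain ⟨hx, h1, hmain⟩ := log_aux hu
  set x := Real.log u with hx_def
  set c : ℝ := 5 * u / x with hc_def
  have hu0 : (0:ℝ) < u := by linarith
  have hc0 : (0:ℝ) < c := by rw [hc_def]; positivity
  have he : (0:ℝ) < Real.exp 1 := Real.exp_pos 1
  have hce : Real.exp 1 * 5 ≤ c := by
    rw [hc_def]
    rw [le_div_iff₀ hx]
    nlinarith
  set L : ℝ := c * (nr / Yr) with hL_def
  have hL0 : (0:ℝ) ≤ L := by rw [hL_def]; positivity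
  obtain ⟨j, hj_def⟩ : ∃ j : ℕ, j = ⌊L⌋₊ + 1 := ⟨⌊L⌋₊ + 1, rfl⟩
  have hLj : L < (j:ℝ) := by
    rw [hj_def]
    push_cast
    exact Nat.lt_floor_add_one L
  have hpredeq : (fun h : Fin (2 ^ ℓ) × Fin (2 ^ t) → Fin (2 ^ k) =>
        ∃ y : Fin (2 ^ k), L < (Nat.card {m : Fin (2 ^ ℓ) // h (m, r) = y} : ℝ)) =
      (fun h : Fin (2 ^ ℓ) × Fin (2 ^ t) → Fin (2 ^ k) =>
        ∃ y : Fin (2 ^ k), j ≤ Nat.card {m : Fin (2 ^ ℓ) // h (m, r) = y}) := by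
    funext h
    apply propext
    apply exists_congr
    intro y
    rw [← Nat.floor_lt hL0, hj_def]
    omega
  rw [hpredeq]
  by_cases hjn : j ≤ 2 ^ ℓ
  case neg =>
    -- event is empty
    have hempty : IsEmpty {h : Fin (2 ^ ℓ) × Fin (2 ^ t) → Fin (2 ^ k) //
        ∃ y : Fin (2 ^ k), j ≤ Nat.card {m : Fin (2 ^ ℓ) // h (m, r) = y}} := by
      constructor
      rintro ⟨h, y, hy⟩
      have hle : Nat.card {m : Fin (2 ^ ℓ) // h (m, r) = y} ≤ 2 ^ ℓ := by
        rw [Nat.card_eq_fintype_card]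
        have := Fintype.card_subtype_le (fun m : Fin (2 ^ ℓ) => h (m, r) = y)
        simpa using this
      omega
    rw [unifPr, Nat.card_of_isEmpty]
    rw [Nat.cast_zero, zero_div]
    positivity
  case pos =>
  have hN : 0 < 2 ^ t := Nat.pow_pos (by norm_num)
  have hjN : j ≤ 2 ^ ℓ * 2 ^ t := le_trans hjn (Nat.le_mul_of_pos_right _ hN)
  -- union bound on cardinality
  have hcard : Nat.card {h : Fin (2 ^ ℓ) × Fin (2 ^ t) → Fin (2 ^ k) //
        ∃ y : Fin (2 ^ k), j ≤ Nat.card {m : Fin (2 ^ ℓ) // h (m, r) = y}} ≤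
      2 ^ k * ((2 ^ ℓ).choose j * (2 ^ k) ^ (2 ^ ℓ * 2 ^ t - j)) := by
    have h0 := card_exists_le (ι := Fin (2 ^ k)) (α := Fin (2 ^ ℓ) × Fin (2 ^ t) → Fin (2 ^ k))
      (fun y h => j ≤ Nat.card {m : Fin (2 ^ ℓ) // h (m, r) = y})
    refine le_trans h0 ?_
    have hbd : ∀ y : Fin (2 ^ k), Nat.card {h : Fin (2 ^ ℓ) × Fin (2 ^ t) → Fin (2 ^ k) //
        j ≤ Nat.card {m : Fin (2 ^ ℓ) // h (m, r) = y}} ≤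
        (2 ^ ℓ).choose j * (2 ^ k) ^ (2 ^ ℓ * 2 ^ t - j) := by
      intro y
      have := card_tail_le (M := Fin (2 ^ ℓ)) (R := Fin (2 ^ t)) (Y := Fin (2 ^ k)) r y j
      simpa using this
    refine le_trans (Finset.sum_le_sum fun y _ => hbd y) ?_
    rw [Finset.sum_const, Finset.card_univ, Fintype.card_fin, smul_eq_mul]
  -- key real inequality
  have hjc : c ≤ (j:ℝ) := by
    have h1' : (1:ℝ) ≤ nr / Yr := (one_le_div hYr0).2 hnY
    have : c ≤ L := by
      rw [hL_def]
      nlinarith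
    linarith
  have hjr0 : (0:ℝ) < (j:ℝ) := lt_of_lt_of_le hc0 hjc
  have hfact0 : (0:ℝ) < ((Nat.factorial j : ℕ) : ℝ) := by
    exact_mod_cast Nat.factorial_pos j
  have f1 : (((2 ^ ℓ).choose j : ℕ) : ℝ) * ((Nat.factorial j : ℕ) : ℝ) ≤ nr ^ j := by
    have hnat : (2 ^ ℓ).choose j * Nat.factorial j ≤ (2 ^ ℓ) ^ j := by
      rw [mul_comm, ← Nat.descFactorial_eq_factorial_mul_choose]
      exact Nat.descFactorial_le_pow _ _
    rw [hnr_def]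
    exact_mod_cast hnat
  have f2 : ((j:ℝ)) ^ j ≤ Real.exp 1 ^ j * ((Nat.factorial j : ℕ) : ℝ) := by
    have hd := Real.pow_div_factorial_le_exp (x := (j:ℝ)) (by positivity) j
    rw [div_le_iff₀ hfact0] at hd
    calc ((j:ℝ)) ^ j ≤ Real.exp (j:ℝ) * ((Nat.factorial j : ℕ) : ℝ) := hd
      _ = Real.exp 1 ^ j * ((Nat.factorial j : ℕ) : ℝ) := by
          rw [← Real.exp_one_pow]
  have hch0 : (0:ℝ) ≤ (((2 ^ ℓ).choose j : ℕ) : ℝ) := by positivity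
  have fc : (((2 ^ ℓ).choose j : ℕ) : ℝ) ≤ (Real.exp 1 * nr / (j:ℝ)) ^ j := by
    rw [div_pow, mul_pow, le_div_iff₀ (pow_pos hjr0 j)]
    calc (((2 ^ ℓ).choose j : ℕ) : ℝ) * (j:ℝ) ^ j
        ≤ (((2 ^ ℓ).choose j : ℕ) : ℝ) * (Real.exp 1 ^ j * ((Nat.factorial j : ℕ) : ℝ)) :=
          mul_le_mul_of_nonneg_left f2 hch0
      _ = Real.exp 1 ^ j * ((((2 ^ ℓ).choose j : ℕ) : ℝ) * ((Nat.factorial j : ℕ) : ℝ)) := by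
          ring
      _ ≤ Real.exp 1 ^ j * nr ^ j := by
          apply mul_le_mul_of_nonneg_left f1 (by positivity)
  have fc2 : (((2 ^ ℓ).choose j : ℕ) : ℝ) / Yr ^ j ≤ (Real.exp 1 * nr / (j:ℝ) / Yr) ^ j := by
    rw [div_pow]
    gcongr
  have hb : Real.exp 1 * nr / (j:ℝ) / Yr ≤ Real.exp 1 / c := by
    rw [div_div, div_le_div_iff₀ (by positivity) hc0]
    have hLY : L * Yr = c * nr := by
      rw [hL_def]
      field_simp
    have : c * nr < (j:ℝ) * Yr := by
      calc c * nr = L * Yr := hLY.symm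
        _ < (j:ℝ) * Yr := by exact mul_lt_mul_of_pos_right hLj hYr0
    nlinarith
  have hb0 : (0:ℝ) ≤ Real.exp 1 * nr / (j:ℝ) / Yr := by positivity
  have hec0 : (0:ℝ) < Real.exp 1 / c := by positivity
  have hec1 : Real.exp 1 / c ≤ 1 := by
    rw [div_le_one hc0]
    nlinarith
  have step1 : (((2 ^ ℓ).choose j : ℕ) : ℝ) / Yr ^ j ≤ (Real.exp 1 / c) ^ j :=
    le_trans fc2 (pow_le_pow_left₀ hb0 hb j)
  have step2 : (Real.exp 1 / c) ^ j ≤ Real.exp (Real.log (Real.exp 1 / c) * c) := by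
    have h1' : (Real.exp 1 / c) ^ j = (Real.exp 1 / c) ^ ((j:ℕ):ℝ) :=
      (Real.rpow_natCast _ j).symm
    rw [h1']
    calc (Real.exp 1 / c) ^ ((j:ℕ):ℝ) ≤ (Real.exp 1 / c) ^ (c:ℝ) :=
        Real.rpow_le_rpow_of_exponent_ge hec0 hec1 hjc
      _ = Real.exp (Real.log (Real.exp 1 / c) * c) := Real.rpow_def_of_pos hec0 c
  have step3 : Real.exp (Real.log (Real.exp 1 / c) * c) < 1 / Yr ^ 3 := by
    have hlogec : Real.log (Real.exp 1 / c) = 1 - Real.log c := by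
      rw [Real.log_div (ne_of_gt he) (ne_of_gt hc0), Real.log_exp]
    have h3u : Real.exp (3 * u) = Yr ^ 3 := by
      rw [show (3:ℝ) * u = u + u + u by ring, Real.exp_add, Real.exp_add, hu_def,
        Real.exp_log hYr0]
      ring
    have hY3 : (1:ℝ) / Yr ^ 3 = Real.exp (-(3 * u)) := by
      rw [Real.exp_neg, h3u, one_div]
    rw [hY3, hlogec]
    apply Real.exp_lt_exp.2
    nlinarith
  have key : (((2 ^ ℓ).choose j : ℕ) : ℝ) * Yr ^ 3 < Yr ^ j := by
    have hlt : (((2 ^ ℓ).choose j : ℕ) : ℝ) / Yr ^ j < 1 / Yr ^ 3 :=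
      lt_of_le_of_lt (le_trans step1 step2) step3
    rw [div_lt_div_iff₀ (pow_pos hYr0 j) (pow_pos hYr0 3), one_mul] at hlt
    exact hlt
  -- assemble
  rw [unifPr]
  have hαcard : ((Fintype.card ((Fin (2 ^ ℓ) × Fin (2 ^ t)) → Fin (2 ^ k)) : ℕ) : ℝ) =
      Yr ^ (2 ^ ℓ * 2 ^ t) := by
    rw [Fintype.card_fun, Fintype.card_prod, Fintype.card_fin, Fintype.card_fin,
      Fintype.card_fin, hYr_def]
    push_cast
    ring
  rw [hαcard]
  have hnum : ((Nat.card {h : Fin (2 ^ ℓ) × Fin (2 ^ t) → Fin (2 ^ k) //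
        ∃ y : Fin (2 ^ k), j ≤ Nat.card {m : Fin (2 ^ ℓ) // h (m, r) = y}} : ℕ) : ℝ) ≤
      Yr * ((((2 ^ ℓ).choose j : ℕ) : ℝ) * Yr ^ (2 ^ ℓ * 2 ^ t - j)) := by
    have := hcard
    have hc' : ((Nat.card {h : Fin (2 ^ ℓ) × Fin (2 ^ t) → Fin (2 ^ k) //
        ∃ y : Fin (2 ^ k), j ≤ Nat.card {m : Fin (2 ^ ℓ) // h (m, r) = y}} : ℕ) : ℝ) ≤
        ((2 ^ k * ((2 ^ ℓ).choose j * (2 ^ k) ^ (2 ^ ℓ * 2 ^ t - j)) : ℕ) : ℝ) := by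
      exact_mod_cast this
    refine le_trans hc' (le_of_eq ?_)
    rw [hYr_def]
    push_cast
    ring
  have hden : (0:ℝ) < Yr ^ (2 ^ ℓ * 2 ^ t) := pow_pos hYr0 _
  calc ((Nat.card {h : Fin (2 ^ ℓ) × Fin (2 ^ t) → Fin (2 ^ k) //
        ∃ y : Fin (2 ^ k), j ≤ Nat.card {m : Fin (2 ^ ℓ) // h (m, r) = y}} : ℕ) : ℝ) /
        Yr ^ (2 ^ ℓ * 2 ^ t)
      ≤ (Yr * ((((2 ^ ℓ).choose j : ℕ) : ℝ) * Yr ^ (2 ^ ℓ * 2 ^ t - j))) /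
        Yr ^ (2 ^ ℓ * 2 ^ t) := by
        exact (div_le_div_iff_of_pos_right hden).2 hnum
    _ < 1 / Yr ^ 2 := by
        rw [div_lt_div_iff₀ hden (by positivity), one_mul]
        have hsplit : Yr ^ (2 ^ ℓ * 2 ^ t - j) * Yr ^ j = Yr ^ (2 ^ ℓ * 2 ^ t) :=
          pow_sub_mul_pow Yr hjN
        rw [← hsplit]
        have hmul := mul_lt_mul_of_pos_left key (pow_pos hYr0 (2 ^ ℓ * 2 ^ t - j))
        calc Yr * ((((2 ^ ℓ).choose j : ℕ) : ℝ) * Yr ^ (2 ^ ℓ * 2 ^ t - j)) * Yr ^ 2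
            = Yr ^ (2 ^ ℓ * 2 ^ t - j) * ((((2 ^ ℓ).choose j : ℕ) : ℝ) * Yr ^ 3) := by
              ring
          _ < Yr ^ (2 ^ ℓ * 2 ^ t - j) * Yr ^ j := hmul
end

section
/- Let ℓ, t, k be natural numbers with k ≥ 2 and 2^ℓ < 2^k. Let h be a uniform random function from Fin(2^ℓ) × Fin(2^t) to Fin(2^k), and fix r ∈ Fin(2^t). Set L = 5·ln(2^k)/ln(ln(2^k)) (a real number). Then the probability (over the uniform choice of h) that there exists y ∈ Fin(2^k) such that the number of m ∈ Fin(2^ℓ) with h(m, r) = y exceeds L is strictly less than 1/(2^k)². -/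
open Finset

section aux
variable {α : Type*} [Fintype α]

lemma natCard_subtype (P : α → Prop) [DecidablePred P] :
    Nat.card {a : α // P a} = (Finset.univ.filter P).card := by
  rw [Nat.card_eq_fintype_card, Fintype.card_subtype]

lemma unifPr_mono {P Q : α → Prop} (h : ∀ a, P a → Q a) : unifPr P ≤ unifPr Q := by
  classical
  have hn : Nat.card {a : α // P a} ≤ Nat.card {a : α // Q a} := by
    simp only [natCard_subtype]
    apply Finset.card_le_card
    intro a ha
    simp only [mem_filter, mem_univ, true_and] at ha ⊢
    exact h a ha
  unfold unifPr
  rw [div_eq_mul_inv, div_eq_mul_inv]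
  apply mul_le_mul_of_nonneg_right _ (by positivity)
  exact_mod_cast hn

lemma unifPr_exists_mem_le {ι : Type*} (t : Finset ι) (P : ι → α → Prop) :
    unifPr (fun a => ∃ i ∈ t, P i a) ≤ ∑ i ∈ t, unifPr (P i) := by
  classical
  have key : Nat.card {a : α // ∃ i ∈ t, P i a} ≤ ∑ i ∈ t, Nat.card {a : α // P i a} := by
    simp only [natCard_subtype]
    calc (univ.filter fun a => ∃ i ∈ t, P i a).card
        ≤ (t.biUnion fun i => univ.filter (P i)).card := by
          apply Finset.card_le_card
          intro a ha
          simp only [mem_filter, mem_univ, true_and] at ha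
          obtain ⟨i, hi, hP⟩ := ha
          exact Finset.mem_biUnion.2 ⟨i, hi, by simp [hP]⟩
      _ ≤ ∑ i ∈ t, (univ.filter (P i)).card := Finset.card_biUnion_le
  unfold unifPr
  rw [← Finset.sum_div, div_eq_mul_inv, div_eq_mul_inv]
  apply mul_le_mul_of_nonneg_right _ (by positivity)
  exact_mod_cast key

lemma unifPr_exists_le {ι : Type*} [Fintype ι] (P : ι → α → Prop) :
    unifPr (fun a => ∃ i, P i a) ≤ ∑ i, unifPr (P i) := by
  have := unifPr_exists_mem_le (univ : Finset ι) P
  simpa using this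

end aux

lemma natCard_eqOn {D Y : Type*} [Fintype D] [Fintype Y] [DecidableEq D] (T : Finset D) (y : Y) :
    Nat.card {h : D → Y // ∀ d ∈ T, h d = y} = Fintype.card Y ^ (Fintype.card D - T.card) := by
  classical
  have e : {h : D → Y // ∀ d ∈ T, h d = y} ≃ ({d : D // d ∉ T} → Y) :=
    { toFun := fun h d => h.1 d.1
      invFun := fun g => ⟨fun d => if hd : d ∈ T then y else g ⟨d, hd⟩, fun d hd => dif_pos hd⟩
      left_inv := by
        rintro ⟨h, hh⟩
        apply Subtype.ext
        funext d
        by_cases hd : d ∈ T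
        · simp [hd, hh d hd]
        · simp [hd]
      right_inv := by
        intro g
        funext d
        simp [d.2] }
  rw [Nat.card_congr e, Nat.card_eq_fintype_card, Fintype.card_fun,
    Fintype.card_subtype_compl]
  congr 2
  simp [Fintype.card_subtype]

lemma unifPr_eqOn {D Y : Type*} [Fintype D] [Fintype Y] [DecidableEq D] [Nonempty Y]
    (T : Finset D) (y : Y) :
    unifPr (fun h : D → Y => ∀ d ∈ T, h d = y) = (1 / (Fintype.card Y : ℝ)) ^ T.card := by
  classical
  have hT : T.card ≤ Fintype.card D := T.card_le_univ
  have hY : (0:ℝ) < Fintype.card Y := by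
    have := Fintype.card_pos (α := Y); exact_mod_cast this
  unfold unifPr
  rw [natCard_eqOn, Fintype.card_fun]
  have h1 : ((Fintype.card Y : ℝ)) ^ Fintype.card D
      = (Fintype.card Y : ℝ) ^ (Fintype.card D - T.card) * (Fintype.card Y : ℝ) ^ T.card := by
    rw [← pow_add, Nat.sub_add_cancel hT]
  push_cast
  rw [div_pow, one_pow, div_eq_div_iff (by positivity) (by positivity), ← pow_add,
    Nat.sub_add_cancel hT, one_mul]


lemma pow_le_factorial_mul_exp (n : ℕ) :
    (n : ℝ) ^ n ≤ n.factorial * Real.exp 1 ^ n := by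
  induction n with
  | zero => simp
  | succ n ih =>
    rcases Nat.eq_zero_or_pos n with h0 | hpos
    · subst h0
      simpa using Real.one_le_exp (by norm_num)
    · have hn0 : (0:ℝ) < n := by exact_mod_cast hpos
      have h1 : ((n:ℝ) + 1) ≤ n * Real.exp (1 / n) := by
        have := Real.add_one_le_exp (1 / (n:ℝ))
        calc ((n:ℝ) + 1) = n * (1 / n + 1) := by field_simp; ring
          _ ≤ n * Real.exp (1 / n) := by
              apply mul_le_mul_of_nonneg_left this hn0.le
      have h2 : ((n:ℝ) + 1) ^ n ≤ ((n:ℝ)) ^ n * Real.exp 1 := by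
        calc ((n:ℝ) + 1) ^ n ≤ ((n:ℝ) * Real.exp (1 / n)) ^ n := by
              apply pow_le_pow_left₀ (by positivity) h1 n
          _ = (n:ℝ) ^ n * Real.exp (1/n) ^ n := by rw [mul_pow]
          _ = (n:ℝ) ^ n * Real.exp 1 := by
              rw [← Real.exp_nat_mul]
              congr 2
              field_simp
      have hfact : (0:ℝ) < n.factorial := by exact_mod_cast n.factorial_pos
      have hexp : (0:ℝ) < Real.exp 1 ^ n := by positivity
      calc (↑(n + 1) : ℝ) ^ (n + 1) = ((n:ℝ) + 1) * ((n:ℝ) + 1) ^ n := by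
            push_cast; ring
        _ ≤ ((n:ℝ) + 1) * ((n:ℝ) ^ n * Real.exp 1) := by
            apply mul_le_mul_of_nonneg_left _ (by positivity)
            exact h2.trans (le_of_eq rfl) |>.trans (by nlinarith [Real.exp_pos 1])
        _ ≤ ((n:ℝ) + 1) * (n.factorial * Real.exp 1 ^ n * Real.exp 1) := by
            apply mul_le_mul_of_nonneg_left _ (by positivity)
            nlinarith [Real.exp_pos 1, ih]
        _ = (n + 1).factorial * Real.exp 1 ^ (n + 1) := by
            rw [Nat.factorial_succ]
            push_cast
            ring

lemma key_ineq (k : ℕ) (hk : 2 ≤ k) {x : ℝ}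
    (hx : 5 * (k * Real.log 2) / Real.log (k * Real.log 2) < x) :
    3 * (k * Real.log 2) < x * (Real.log 2 + Real.log x - 1) := by
  have hlog2 := Real.log_two_gt_d9
  set a : ℝ := k * Real.log 2 with ha_def
  have ha1 : 1 < a := by
    have hk2 : (2:ℝ) ≤ k := by exact_mod_cast hk
    nlinarith
  have hb : 0 < Real.log a := Real.log_pos ha1
  set b := Real.log a with hb_def
  have hL0 : 0 < 5 * a / b := by positivity
  have hx0 : 0 < x := lt_trans hL0 hx
  have hlogb : Real.log b ≤ b - 1 := Real.log_le_sub_one_of_pos hb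
  have he : (2.7182818283:ℝ) < Real.exp 1 := Real.exp_one_gt_d9
  have hlogbe : Real.log b ≤ b / Real.exp 1 := by
    have h1 : 0 < b / Real.exp 1 := by positivity
    have h2 := Real.log_le_sub_one_of_pos h1
    rw [Real.log_div hb.ne' (Real.exp_ne_zero 1), Real.log_exp] at h2
    linarith
  have hlog5 : 0 < Real.log 5 := Real.log_pos (by norm_num)
  have hlog10 : 1 < Real.log 5 + Real.log 2 := by
    have h10 : Real.exp 1 < 10 := lt_trans Real.exp_one_lt_d9 (by norm_num)
    have h11 := (Real.lt_log_iff_exp_lt (by norm_num : (0:ℝ) < 10)).2 h10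
    rw [show (10:ℝ) = 5 * 2 by norm_num, Real.log_mul (by norm_num) (by norm_num)] at h11
    linarith
  have hlogL : Real.log (5 * a / b) = Real.log 5 + b - Real.log b := by
    rw [Real.log_div (by positivity) hb.ne', Real.log_mul (by norm_num) (by positivity),
      ← hb_def]
  have hlogx : Real.log (5 * a / b) < Real.log x := Real.log_lt_log hL0 hx
  have hbrL : Real.log 5 + b - Real.log b + Real.log 2 - 1 ≤ Real.log 2 + Real.log x - 1 := by
    rw [hlogL] at hlogx; linarith
  have hbrLpos : 0 < Real.log 5 + b - Real.log b + Real.log 2 - 1 := by linarith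
  have hbrpos : 0 < Real.log 2 + Real.log x - 1 := lt_of_lt_of_le hbrLpos hbrL
  have hmain : 3 * a ≤ 5 * a / b * (Real.log 5 + b - Real.log b + Real.log 2 - 1) := by
    rw [div_mul_eq_mul_div, le_div_iff₀ hb]
    have hbe : b / Real.exp 1 ≤ b * (2 / 5) := by
      rw [div_le_iff₀ (Real.exp_pos 1)]
      nlinarith [mul_le_mul_of_nonneg_left he.le hb.le]
    have h5 : 5 * Real.log b ≤ 2 * b := by linarith
    have hX : 3 * b ≤ 5 * (Real.log 5 + b - Real.log b + Real.log 2 - 1) := by linarith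
    nlinarith [mul_le_mul_of_nonneg_left hX (show (0:ℝ) ≤ a by linarith)]
  calc 3 * a ≤ 5 * a / b * (Real.log 5 + b - Real.log b + Real.log 2 - 1) := hmain
    _ ≤ 5 * a / b * (Real.log 2 + Real.log x - 1) :=
        mul_le_mul_of_nonneg_left hbrL hL0.le
    _ < x * (Real.log 2 + Real.log x - 1) := mul_lt_mul_of_pos_right hx hbrpos


/-- Balls-into-bins lemma, case `#M < #Y`: for a uniform random function
`h : Fin (2^ℓ) × Fin (2^t) → Fin (2^k)` and a fixed prefix `r`, the probability that some
hash value `y` has more than `5 ln(2^k)/ln ln(2^k)` preimages with prefix `r`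
is less than `1/(2^k)²`. -/
theorem ballsIntoBins_small (ℓ t k : ℕ) (hk : 2 ≤ k) (hMY : 2 ^ ℓ < 2 ^ k)
    (r : Fin (2 ^ t)) :
    unifPr (fun h : Fin (2 ^ ℓ) × Fin (2 ^ t) → Fin (2 ^ k) =>
        ∃ y : Fin (2 ^ k),
          5 * Real.log (2 ^ k) / Real.log (Real.log (2 ^ k))
            < (Nat.card {m : Fin (2 ^ ℓ) // h (m, r) = y} : ℝ))
      < 1 / ((2 : ℝ) ^ k) ^ 2 := by
  classical
  have hlog2 := Real.log_two_gt_d9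
  have hL_eq : 5 * Real.log ((2:ℝ) ^ k) / Real.log (Real.log ((2:ℝ) ^ k))
      = 5 * ((k:ℝ) * Real.log 2) / Real.log ((k:ℝ) * Real.log 2) := by
    rw [Real.log_pow]
  rw [hL_eq]
  set a : ℝ := (k:ℝ) * Real.log 2 with ha_def
  set L : ℝ := 5 * a / Real.log a with hL_def
  have ha1 : 1 < a := by
    have hk2 : (2:ℝ) ≤ k := by exact_mod_cast hk
    nlinarith
  have hb : 0 < Real.log a := Real.log_pos ha1
  have hL0 : 0 < L := by rw [hL_def]; positivity
  set s : ℕ := Nat.floor L + 1 with hs_def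
  have hs1 : 1 ≤ s := Nat.le_add_left 1 _
  have hsL : L < (s:ℝ) := by
    have h := Nat.lt_floor_add_one L
    rw [hs_def]; push_cast; exact h
  have hne : Nonempty (Fin (2 ^ k)) := ⟨⟨0, by positivity⟩⟩
  have hkl : ℓ < k := by
    by_contra hcon
    push_neg at hcon
    exact absurd (Nat.pow_le_pow_right (by norm_num) hcon) (not_le.2 hMY)
  -- Step 1: union bound over y
  have step1 := unifPr_exists_le (α := Fin (2 ^ ℓ) × Fin (2 ^ t) → Fin (2 ^ k))
    (fun (y : Fin (2 ^ k)) h => L < (Nat.card {m : Fin (2 ^ ℓ) // h (m, r) = y} : ℝ))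
  -- Step 2: per-y bound
  have step2 : ∀ y : Fin (2 ^ k),
      unifPr (fun h : Fin (2 ^ ℓ) × Fin (2 ^ t) → Fin (2 ^ k) =>
        L < (Nat.card {m : Fin (2 ^ ℓ) // h (m, r) = y} : ℝ))
      ≤ ((2 ^ ℓ).choose s : ℝ) * (1 / (2:ℝ) ^ k) ^ s := by
    intro y
    have h2 : unifPr (fun h : Fin (2 ^ ℓ) × Fin (2 ^ t) → Fin (2 ^ k) =>
          L < (Nat.card {m : Fin (2 ^ ℓ) // h (m, r) = y} : ℝ))
        ≤ unifPr (fun h : Fin (2 ^ ℓ) × Fin (2 ^ t) → Fin (2 ^ k) =>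
          ∃ T ∈ powersetCard s (univ : Finset (Fin (2 ^ ℓ))), ∀ m ∈ T, h (m, r) = y) := by
      apply unifPr_mono
      intro h hy
      rw [natCard_subtype] at hy
      have hfloor : Nat.floor L < (univ.filter fun m => h (m, r) = y).card :=
        (Nat.floor_lt hL0.le).2 hy
      have hcard : s ≤ (univ.filter fun m => h (m, r) = y).card := by omega
      obtain ⟨T, hTsub, hTcard⟩ := Finset.exists_subset_card_eq hcard
      refine ⟨T, Finset.mem_powersetCard_univ.2 hTcard, fun m hm => ?_⟩
      have hmem := hTsub hm
      simp only [Finset.mem_filter] at hmem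
      exact hmem.2
    have h3 : ∀ T ∈ powersetCard s (univ : Finset (Fin (2 ^ ℓ))),
        unifPr (fun h : Fin (2 ^ ℓ) × Fin (2 ^ t) → Fin (2 ^ k) =>
          ∀ m ∈ T, h (m, r) = y) = (1 / (2:ℝ) ^ k) ^ s := by
      intro T hT
      have hTc : T.card = s := Finset.mem_powersetCard_univ.1 hT
      have hinj : Function.Injective (fun m : Fin (2 ^ ℓ) => ((m, r) : Fin (2 ^ ℓ) × Fin (2 ^ t))) := by
        intro m m' hmm
        simpa using hmm
      have hpred : (fun h : Fin (2 ^ ℓ) × Fin (2 ^ t) → Fin (2 ^ k) => ∀ m ∈ T, h (m, r) = y)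
          = (fun h : Fin (2 ^ ℓ) × Fin (2 ^ t) → Fin (2 ^ k) =>
              ∀ d ∈ T.map ⟨fun m => (m, r), hinj⟩, h d = y) := by
        funext h
        apply propext
        constructor
        · rintro hh d hd
          rw [Finset.mem_map] at hd
          obtain ⟨m, hm, rfl⟩ := hd
          exact hh m hm
        · intro hh m hm
          exact hh (m, r) (Finset.mem_map_of_mem _ hm)
      rw [hpred, unifPr_eqOn, Finset.card_map, hTc, Fintype.card_fin]
      push_cast
      ring
    refine h2.trans ((unifPr_exists_mem_le _ _).trans ?_)
    rw [Finset.sum_congr rfl h3, Finset.sum_const, Finset.card_powersetCard,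
      Finset.card_univ, Fintype.card_fin, nsmul_eq_mul]
  -- Step 3: final numeric bound
  have hfin : ((2:ℝ) ^ k : ℝ) * (((2 ^ ℓ).choose s : ℝ) * (1 / (2:ℝ) ^ k) ^ s)
      < 1 / ((2 : ℝ) ^ k) ^ 2 := by
    set A : ℝ := (2:ℝ) ^ k with hA_def
    have hA0 : 0 < A := by rw [hA_def]; positivity
    have hx' : 5 * ((k:ℝ) * Real.log 2) / Real.log ((k:ℝ) * Real.log 2) < (s:ℝ) := by
      rw [← ha_def, ← hL_def]; exact hsL
    have hkey := key_ineq k hk hx'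
    rw [← ha_def] at hkey
    have hfact := pow_le_factorial_mul_exp s
    have hchoose_nat : (2 ^ ℓ).choose s * s.factorial ≤ (2 ^ (k - 1)) ^ s := by
      have h1 : (2 ^ ℓ).descFactorial s ≤ (2 ^ ℓ) ^ s := Nat.descFactorial_le_pow _ _
      have h2 : (2 ^ ℓ) ^ s ≤ (2 ^ (k - 1)) ^ s :=
        Nat.pow_le_pow_left (Nat.pow_le_pow_right (by norm_num) (by omega)) s
      calc (2 ^ ℓ).choose s * s.factorial = (2 ^ ℓ).descFactorial s := by
            rw [Nat.descFactorial_eq_factorial_mul_choose]; ring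
        _ ≤ _ := le_trans h1 h2
    have h2k1 : ((2:ℝ)) ^ (k - 1) = A / 2 := by
      rw [eq_div_iff (two_ne_zero), hA_def, ← pow_succ]
      congr 1
      omega
    have hchoose : ((2 ^ ℓ).choose s : ℝ) * (s.factorial : ℝ) ≤ (A / 2) ^ s := by
      rw [← h2k1]
      exact_mod_cast hchoose_nat
    have hlogA : Real.log A = a := by rw [hA_def, Real.log_pow, ha_def]
    have hsp : (0:ℝ) < (s:ℝ) := by exact_mod_cast hs1
    have hlog_comp : Real.log (A ^ 3 * Real.exp 1 ^ s) < Real.log ((s:ℝ) ^ s * (2:ℝ) ^ s) := by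
      rw [Real.log_mul (by positivity) (by positivity),
        Real.log_mul (by positivity) (by positivity)]
      simp only [Real.log_pow, Real.log_exp, hlogA]
      push_cast at hkey hsp ⊢
      nlinarith [hkey, hsp, ha_def]
    have hA3 : A ^ 3 * Real.exp 1 ^ s < (s:ℝ) ^ s * (2:ℝ) ^ s :=
      (Real.log_lt_log_iff (by positivity) (by positivity)).1 hlog_comp
    have hep : (0:ℝ) < Real.exp 1 ^ s := by positivity
    have hA3' : A ^ 3 < (s.factorial : ℝ) * (2:ℝ) ^ s := by
      refine lt_of_mul_lt_mul_right ?_ hep.le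
      calc A ^ 3 * Real.exp 1 ^ s < (s:ℝ) ^ s * (2:ℝ) ^ s := hA3
        _ ≤ (s.factorial : ℝ) * Real.exp 1 ^ s * (2:ℝ) ^ s :=
            mul_le_mul_of_nonneg_right hfact (by positivity)
        _ = (s.factorial : ℝ) * (2:ℝ) ^ s * Real.exp 1 ^ s := by ring
    have hsf : (0:ℝ) < (s.factorial : ℝ) := by exact_mod_cast s.factorial_pos
    have hC : ((2 ^ ℓ).choose s : ℝ) ≤ (A / 2) ^ s / (s.factorial : ℝ) := by
      rw [le_div_iff₀ hsf]; exact hchoose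
    calc A * (((2 ^ ℓ).choose s : ℝ) * (1 / A) ^ s)
        ≤ A * ((A / 2) ^ s / (s.factorial : ℝ) * (1 / A) ^ s) := by
          apply mul_le_mul_of_nonneg_left _ hA0.le
          exact mul_le_mul_of_nonneg_right hC (by positivity)
      _ = A * ((A / 2) * (1 / A)) ^ s / (s.factorial : ℝ) := by
          rw [mul_pow]; ring
      _ = A * ((1:ℝ) / 2) ^ s / (s.factorial : ℝ) := by
          rw [show (A / 2) * (1 / A) = (1:ℝ) / 2 by field_simp]
      _ = A / ((s.factorial : ℝ) * (2:ℝ) ^ s) := by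
          rw [div_pow, one_pow, mul_one_div, div_div, mul_comm ((2:ℝ) ^ s)]
      _ < A / A ^ 3 := div_lt_div_of_pos_left hA0 (by positivity) hA3'
      _ = 1 / A ^ 2 := by
          field_simp
  calc unifPr (fun h : Fin (2 ^ ℓ) × Fin (2 ^ t) → Fin (2 ^ k) =>
        ∃ y : Fin (2 ^ k), L < (Nat.card {m : Fin (2 ^ ℓ) // h (m, r) = y} : ℝ))
      ≤ ∑ y : Fin (2 ^ k), unifPr (fun h : Fin (2 ^ ℓ) × Fin (2 ^ t) → Fin (2 ^ k) =>
          L < (Nat.card {m : Fin (2 ^ ℓ) // h (m, r) = y} : ℝ)) := step1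
    _ ≤ ∑ _y : Fin (2 ^ k), ((2 ^ ℓ).choose s : ℝ) * (1 / (2:ℝ) ^ k) ^ s :=
        Finset.sum_le_sum fun y _ => step2 y
    _ = ((2:ℝ) ^ k) * (((2 ^ ℓ).choose s : ℝ) * (1 / (2:ℝ) ^ k) ^ s) := by
        rw [Finset.sum_const, Finset.card_univ, Fintype.card_fin, nsmul_eq_mul]
        push_cast
        ring
    _ < 1 / ((2 : ℝ) ^ k) ^ 2 := hfin
end

section
/- Let ℓ, k₁, k be natural numbers with ℓ ≥ k ≥ 2, let h be a uniform random function from Fin(2^ℓ) × Fin(2^{k₁}) to Fin(2^k), and fix m₀ ∈ Fin(2^ℓ) and r₀ ∈ Fin(2^{k₁}). Then the probability (over the uniform choice of h) that there exists m' ∈ Fin(2^ℓ) with m' ≠ m₀ and h(m', r₀) = h(m₀, r₀) is at least 1 − exp(−1/2). -/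
section Aux

variable {A B Y : Type*} [Fintype A] [DecidableEq A] [Fintype B] [DecidableEq B]
  [Fintype Y] [DecidableEq Y]

/-- Functions avoiding a fixed value `y` away from `a₀`, taking value `y` at `a₀`. -/
def colEquiv (a₀ : A) (y : Y) :
    {g : A → Y // g a₀ = y ∧ ∀ a, a ≠ a₀ → g a ≠ y} ≃ ({a : A // a ≠ a₀} → {y' : Y // y' ≠ y}) where
  toFun g a := ⟨g.1 a.1, g.2.2 a.1 a.2⟩
  invFun f := ⟨fun a => if h : a = a₀ then y else (f ⟨a, h⟩).1, by
    refine ⟨dif_pos rfl, fun a ha => ?_⟩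
    simp only [dif_neg ha]; exact (f ⟨a, ha⟩).2⟩
  left_inv g := by
    apply Subtype.ext
    funext a
    by_cases h : a = a₀
    · subst h; simp [g.2.1]
    · simp [h]
  right_inv f := by
    funext a
    apply Subtype.ext
    simp [a.2]

/-- Splitting a function on `A × B` into its `b₀`-column and the rest, where a
predicate depends only on the column. -/
def splitEquiv (b₀ : B) (Q : (A → Y) → Prop) :
    {h : A × B → Y // Q (fun a => h (a, b₀))} ≃
      {g : A → Y // Q g} × ({x : A × B // x.2 ≠ b₀} → Y) where
  toFun h := (⟨fun a => h.1 (a, b₀), h.2⟩, fun x => h.1 x.1)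
  invFun p := ⟨fun x => if hb : x.2 = b₀ then p.1.1 x.1 else p.2 ⟨x, hb⟩, by
    have : (fun a => if hb : ((a : A), b₀).2 = b₀ then p.1.1 a else p.2 ⟨(a, b₀), hb⟩) = p.1.1 :=
      funext fun a => dif_pos rfl
    rw [this]; exact p.1.2⟩
  left_inv h := by
    apply Subtype.ext
    funext x
    obtain ⟨xa, xb⟩ := x
    by_cases hb : xb = b₀
    · subst hb; simp
    · simp [hb]
  right_inv p := by
    refine Prod.ext (Subtype.ext (funext fun a => dif_pos rfl)) (funext fun x => ?_)
    simp [x.2]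

lemma card_ne (a₀ : A) : Fintype.card {a : A // a ≠ a₀} = Fintype.card A - 1 := by
  simp [Fintype.card_subtype_compl, Fintype.card_subtype_eq]

lemma card_col (a₀ : A) :
    Nat.card {g : A → Y // ∀ a, a ≠ a₀ → g a ≠ g a₀}
      = Fintype.card Y * (Fintype.card Y - 1) ^ (Fintype.card A - 1) := by
  classical
  have e := (Equiv.sigmaFiberEquiv (fun g : {g : A → Y // ∀ a, a ≠ a₀ → g a ≠ g a₀} => g.1 a₀)).symm
  rw [Nat.card_congr e, Nat.card_eq_fintype_card, Fintype.card_sigma]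
  have hy : ∀ y : Y, Nat.card {g : {g : A → Y // ∀ a, a ≠ a₀ → g a ≠ g a₀} // g.1 a₀ = y}
      = (Fintype.card Y - 1) ^ (Fintype.card A - 1) := by
    intro y
    have e2 : {g : {g : A → Y // ∀ a, a ≠ a₀ → g a ≠ g a₀} // g.1 a₀ = y} ≃
        {g : A → Y // g a₀ = y ∧ ∀ a, a ≠ a₀ → g a ≠ y} := by
      refine (Equiv.subtypeSubtypeEquivSubtypeInter
        (fun g : A → Y => ∀ a, a ≠ a₀ → g a ≠ g a₀) (fun g => g a₀ = y)).trans
        (Equiv.subtypeEquivRight ?_)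
      intro g
      constructor
      · rintro ⟨hP, hy⟩; exact ⟨hy, fun a ha => hy ▸ hP a ha⟩
      · rintro ⟨hy, hP⟩; exact ⟨fun a ha => hy.symm ▸ hP a ha, hy⟩
    rw [Nat.card_congr (e2.trans (colEquiv a₀ y)), Nat.card_eq_fintype_card,
      Fintype.card_fun, Fintype.card_subtype_compl, Fintype.card_subtype_eq, card_ne]
  have hs : ∑ y : Y, Fintype.card {g : {g : A → Y // ∀ a, a ≠ a₀ → g a ≠ g a₀} // g.1 a₀ = y}
      = ∑ _y : Y, (Fintype.card Y - 1) ^ (Fintype.card A - 1) :=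
    Finset.sum_congr rfl fun y _ => by rw [← Nat.card_eq_fintype_card, hy]
  rw [hs, Finset.sum_const, smul_eq_mul, Finset.card_univ, mul_comm]

lemma card_fail (a₀ : A) (b₀ : B) :
    Nat.card {h : A × B → Y // ∀ a, a ≠ a₀ → h (a, b₀) ≠ h (a₀, b₀)}
      = Fintype.card Y * (Fintype.card Y - 1) ^ (Fintype.card A - 1)
        * Fintype.card Y ^ (Fintype.card A * (Fintype.card B - 1)) := by
  classical
  rw [Nat.card_congr (splitEquiv b₀ (fun g : A → Y => ∀ a, a ≠ a₀ → g a ≠ g a₀)),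
    Nat.card_prod, card_col, Nat.card_eq_fintype_card, Fintype.card_fun]
  congr 2
  have : {x : A × B // x.2 ≠ b₀} ≃ A × {b : B // b ≠ b₀} :=
    ⟨fun x => (x.1.1, ⟨x.1.2, x.2⟩), fun p => ⟨(p.1, p.2.1), p.2.2⟩,
      fun x => rfl, fun p => rfl⟩
  rw [Fintype.card_congr this, Fintype.card_prod, card_ne]

end Aux

/-- For a uniform random function `h : Fin (2^ℓ) × Fin (2^k₁) → Fin (2^k)` with `ℓ ≥ k ≥ 2`,
fixed `m₀` and `r₀`, the probability that there is a second preimage with the same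
prefix `r₀` is at least `1 - exp(-1/2)`. -/
theorem secondPreimage_prob_half (ℓ k₁ k : ℕ) (hk : 2 ≤ k) (hℓ : k ≤ ℓ)
    (m₀ : Fin (2 ^ ℓ)) (r₀ : Fin (2 ^ k₁)) :
    1 - Real.exp (-(1 / 2))
      ≤ unifPr (fun h : Fin (2 ^ ℓ) × Fin (2 ^ k₁) → Fin (2 ^ k) =>
          ∃ m' : Fin (2 ^ ℓ), m' ≠ m₀ ∧ h (m', r₀) = h (m₀, r₀)) := by
  classical
  obtain ⟨n', hn'⟩ : ∃ n', 2 ^ ℓ = n' + 1 := ⟨2 ^ ℓ - 1, by have := Nat.one_le_two_pow (n := ℓ); omega⟩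
  obtain ⟨s', hs'⟩ : ∃ s', 2 ^ k₁ = s' + 1 := ⟨2 ^ k₁ - 1, by have := Nat.one_le_two_pow (n := k₁); omega⟩
  have hq1 : 2 ≤ 2 ^ k := by
    calc 2 = 2 ^ 1 := rfl
    _ ≤ 2 ^ k := Nat.pow_le_pow_right (by norm_num) (by omega)
  have hn2 : 2 ≤ 2 ^ ℓ := by
    calc 2 = 2 ^ 1 := rfl
    _ ≤ 2 ^ ℓ := Nat.pow_le_pow_right (by norm_num) (by omega)
  have hqn : 2 ^ k ≤ 2 ^ ℓ := Nat.pow_le_pow_right (by norm_num) hℓ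
  set P : (Fin (2 ^ ℓ) × Fin (2 ^ k₁) → Fin (2 ^ k)) → Prop :=
    fun h => ∃ m' : Fin (2 ^ ℓ), m' ≠ m₀ ∧ h (m', r₀) = h (m₀, r₀) with hP
  -- failure count
  have hfail : Nat.card {h : Fin (2 ^ ℓ) × Fin (2 ^ k₁) → Fin (2 ^ k) // ¬ P h}
      = 2 ^ k * (2 ^ k - 1) ^ n' * (2 ^ k) ^ ((n' + 1) * s') := by
    have e : {h : Fin (2 ^ ℓ) × Fin (2 ^ k₁) → Fin (2 ^ k) // ¬ P h} ≃
        {h : Fin (2 ^ ℓ) × Fin (2 ^ k₁) → Fin (2 ^ k) //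
          ∀ a, a ≠ m₀ → h (a, r₀) ≠ h (m₀, r₀)} := by
      refine Equiv.subtypeEquivRight fun h => ?_
      simp only [hP, not_exists, not_and]
    rw [Nat.card_congr e, card_fail]
    simp [hn', hs']
  have htot : Fintype.card (Fin (2 ^ ℓ) × Fin (2 ^ k₁) → Fin (2 ^ k))
      = (2 ^ k) ^ (2 ^ ℓ * 2 ^ k₁) := by
    simp [Fintype.card_fun]
  have hle : Nat.card {h : Fin (2 ^ ℓ) × Fin (2 ^ k₁) → Fin (2 ^ k) // ¬ P h}
      ≤ (2 ^ k) ^ (2 ^ ℓ * 2 ^ k₁) := by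
    rw [Nat.card_eq_fintype_card, ← htot]
    exact Fintype.card_subtype_le _
  have hsucc : Nat.card {h : Fin (2 ^ ℓ) × Fin (2 ^ k₁) → Fin (2 ^ k) // P h}
      = (2 ^ k) ^ (2 ^ ℓ * 2 ^ k₁)
        - Nat.card {h : Fin (2 ^ ℓ) × Fin (2 ^ k₁) → Fin (2 ^ k) // ¬ P h} := by
    have h1 := Fintype.card_subtype_compl P
    rw [htot] at h1
    have h2 : Fintype.card {h : Fin (2 ^ ℓ) × Fin (2 ^ k₁) → Fin (2 ^ k) // P h}
        ≤ (2 ^ k) ^ (2 ^ ℓ * 2 ^ k₁) := by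
      rw [← htot]; exact Fintype.card_subtype_le _
    rw [Nat.card_eq_fintype_card, Nat.card_eq_fintype_card] at *
    omega
  -- real arithmetic
  set F : ℕ := Nat.card {h : Fin (2 ^ ℓ) × Fin (2 ^ k₁) → Fin (2 ^ k) // ¬ P h} with hF
  have hq0 : (0 : ℝ) < ((2 : ℕ) : ℝ) ^ k := by positivity
  have hqR : ((2 ^ k : ℕ) : ℝ) = (2 : ℝ) ^ k := by push_cast; ring
  have hqpos : (0 : ℝ) < (2 : ℝ) ^ k := by positivity
  have htotpos : (0 : ℝ) < ((2 : ℝ) ^ k) ^ (2 ^ ℓ * 2 ^ k₁) := by positivity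
  have key : (F : ℝ) / ((2 : ℝ) ^ k) ^ (2 ^ ℓ * 2 ^ k₁) ≤ Real.exp (-(1 / 2)) := by
    have hFR : (F : ℝ) = (2 : ℝ) ^ k * ((2 : ℝ) ^ k - 1) ^ n' * ((2 : ℝ) ^ k) ^ ((n' + 1) * s') := by
      rw [hfail]
      push_cast [Nat.cast_sub (show 1 ≤ 2 ^ k by omega)]
      ring
    have hsplit : ((2 : ℝ) ^ k) ^ (2 ^ ℓ * 2 ^ k₁)
        = (2 : ℝ) ^ k * ((2 : ℝ) ^ k) ^ n' * ((2 : ℝ) ^ k) ^ ((n' + 1) * s') := by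
      rw [hn', hs']
      rw [show (n' + 1) * (s' + 1) = 1 + n' + (n' + 1) * s' by ring]
      rw [pow_add, pow_add, pow_one]
    have hratio : (F : ℝ) / ((2 : ℝ) ^ k) ^ (2 ^ ℓ * 2 ^ k₁)
        = (((2 : ℝ) ^ k - 1) / (2 : ℝ) ^ k) ^ n' := by
      rw [hFR, hsplit, div_pow]
      field_simp
    rw [hratio]
    have hbase0 : (0 : ℝ) ≤ ((2 : ℝ) ^ k - 1) / (2 : ℝ) ^ k := by
      apply div_nonneg _ (le_of_lt hqpos)
      have : (1 : ℝ) ≤ (2 : ℝ) ^ k := one_le_pow₀ (by norm_num)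
      linarith
    have hexp : ((2 : ℝ) ^ k - 1) / (2 : ℝ) ^ k ≤ Real.exp (-(1 / (2 : ℝ) ^ k)) := by
      rw [div_le_iff₀ hqpos]
      have h1 := Real.add_one_le_exp (-(1 / (2 : ℝ) ^ k))
      calc (2 : ℝ) ^ k - 1 = (-(1 / (2 : ℝ) ^ k) + 1) * (2 : ℝ) ^ k := by field_simp; ring
      _ ≤ Real.exp (-(1 / (2 : ℝ) ^ k)) * (2 : ℝ) ^ k :=
          mul_le_mul_of_nonneg_right h1 (le_of_lt hqpos)
    calc (((2 : ℝ) ^ k - 1) / (2 : ℝ) ^ k) ^ n'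
        ≤ Real.exp (-(1 / (2 : ℝ) ^ k)) ^ n' := pow_le_pow_left₀ hbase0 hexp n'
    _ = Real.exp (n' * -(1 / (2 : ℝ) ^ k)) := (Real.exp_nat_mul _ n').symm
    _ ≤ Real.exp (-(1 / 2)) := by
        apply Real.exp_le_exp.mpr
        have hnat : 2 ^ k ≤ 2 * n' := by omega
        have hR : ((2 : ℝ) ^ k) ≤ 2 * n' := by
          calc ((2 : ℝ) ^ k) = ((2 ^ k : ℕ) : ℝ) := by push_cast; ring
          _ ≤ ((2 * n' : ℕ) : ℝ) := Nat.cast_le.mpr hnat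
          _ = 2 * n' := by push_cast; ring
        rw [mul_neg, neg_le_neg_iff, mul_one_div, le_div_iff₀ hqpos]
        linarith
  have hcast : (↑(Nat.card {h : Fin (2 ^ ℓ) × Fin (2 ^ k₁) → Fin (2 ^ k) // P h}) : ℝ)
      = ((2 : ℝ) ^ k) ^ (2 ^ ℓ * 2 ^ k₁) - F := by
    rw [hsucc, Nat.cast_sub hle]
    push_cast
    ring
  rw [unifPr, hcast, htot]
  push_cast
  rw [sub_div, div_self (ne_of_gt htotpos)]
  linarith [key]
end

section
/- Let X and Y be finite nonempty types, let h be a uniform random function from X to Y, and fix x₀ ∈ X and y₀ ∈ Y. Then (i) the random variable h ↦ #{x ∈ X : x ≠ x₀ ∧ h(x) = y₀} is distributed according to the binomial distribution B(#X − 1, 1/#Y), and (ii) this random variable is independent of the random variable h ↦ h(x₀). -/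
open scoped ENNReal

open Finset in
lemma aux_card_fiber {Z Y : Type*} [Fintype Z] [Fintype Y] [DecidableEq Z] [DecidableEq Y]
    (y₀ : Y) (S : Finset Z) :
    Nat.card {g : Z → Y // ∀ z, g z = y₀ ↔ z ∈ S}
      = (Fintype.card Y - 1) ^ (Fintype.card Z - S.card) := by
  have e : {g : Z → Y // ∀ z, g z = y₀ ↔ z ∈ S} ≃ ({z : Z // z ∉ S} → {y : Y // y ≠ y₀}) :=
    { toFun := fun gp z => ⟨gp.1 z.1, fun h => z.2 ((gp.2 z.1).1 h)⟩
      invFun := fun f => ⟨fun z => if h : z ∈ S then y₀ else (f ⟨z, h⟩).1, fun z => by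
        by_cases h : z ∈ S
        · simp [h]
        · simpa [h] using (f ⟨z, h⟩).2⟩
      left_inv := fun gp => Subtype.ext (funext fun z => by
        by_cases h : z ∈ S
        · simp [h, (gp.2 z).2 h]
        · simp [h])
      right_inv := fun f => funext fun z => Subtype.ext (by simp [z.2]) }
  rw [Nat.card_congr e, Nat.card_fun, Nat.card_eq_fintype_card, Nat.card_eq_fintype_card]
  congr 1
  · rw [Fintype.card_subtype_compl, Fintype.card_subtype_eq]
  · rw [Fintype.card_subtype_compl]
    congr 1
    exact Fintype.card_coe S

open Finset in
lemma aux_card_count {Z Y : Type*} [Fintype Z] [Fintype Y] [DecidableEq Z] [DecidableEq Y]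
    (y₀ : Y) (n : ℕ) :
    Nat.card {g : Z → Y // Nat.card {z // g z = y₀} = n}
      = (Fintype.card Z).choose n * (Fintype.card Y - 1) ^ (Fintype.card Z - n) := by
  classical
  have hinner : ∀ g : Z → Y,
      Nat.card {z // g z = y₀} = (univ.filter fun z => g z = y₀).card := fun g => by
    rw [Nat.card_eq_fintype_card, Fintype.card_subtype]
  rw [Nat.card_eq_fintype_card, Fintype.card_subtype]
  have hset : (univ.filter fun g : Z → Y => Nat.card {z // g z = y₀} = n)
      = (powersetCard n (univ : Finset Z)).biUnion
          (fun S => univ.filter fun g => ∀ z, g z = y₀ ↔ z ∈ S) := by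
    ext g
    simp only [mem_filter, mem_univ, true_and, mem_biUnion, mem_powersetCard_univ, hinner]
    constructor
    · intro hg
      exact ⟨univ.filter fun z => g z = y₀, hg, fun z => by simp⟩
    · rintro ⟨S, hS, hgS⟩
      rw [← hS]
      congr 1
      ext z
      simp [hgS]
  rw [hset, card_biUnion]
  · have hpiece : ∀ S ∈ powersetCard n (univ : Finset Z),
        (univ.filter fun g : Z → Y => ∀ z, g z = y₀ ↔ z ∈ S).card
          = (Fintype.card Y - 1) ^ (Fintype.card Z - n) := by
      intro S hS
      rw [mem_powersetCard_univ] at hS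
      rw [← Fintype.card_subtype, ← Nat.card_eq_fintype_card, aux_card_fiber y₀ S, hS]
    rw [Finset.sum_congr rfl hpiece, Finset.sum_const, Finset.card_powersetCard,
      Finset.card_univ, smul_eq_mul]
  · intro S hS T hT hST
    simp only [disjoint_left, mem_filter, mem_univ, true_and]
    intro g hgS hgT
    exact hST (by ext z; rw [← hgS z, hgT z])

lemma aux_uniform_toMeasure_apply {α : Type*} [Fintype α] [Nonempty α] (s : Set α) :
    (@PMF.toMeasure α ⊤ (PMF.uniformOfFintype α)) s
      = (Nat.card s : ℝ≥0∞) * (Fintype.card α : ℝ≥0∞)⁻¹ := by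
  classical
  rw [@PMF.toMeasure_uniformOfFintype_apply α _ _ s ⊤ MeasurableSpace.measurableSet_top,
    div_eq_mul_inv]
  congr 2
  rw [Nat.card_eq_fintype_card]

lemma aux_uniform_map_apply {α β : Type*} [Fintype α] [Nonempty α] (f : α → β) (b : β) :
    (PMF.uniformOfFintype α).map f b
      = (Nat.card {a // f a = b} : ℝ≥0∞) * (Fintype.card α : ℝ≥0∞)⁻¹ := by
  classical
  rw [PMF.map_apply, tsum_fintype]
  simp only [PMF.uniformOfFintype_apply]
  rw [← Finset.sum_filter, Finset.sum_const, nsmul_eq_mul]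
  congr 2
  rw [Nat.card_eq_fintype_card, Fintype.card_subtype]
  congr 1
  ext a
  simp [eq_comm]

lemma aux_binomial_map_apply (p : NNReal) (hp : p ≤ 1) (N n : ℕ) :
    ((PMF.binomial p hp N).map Fin.val) n
      = if n ≤ N then (p : ℝ≥0∞) ^ n * (1 - (p : ℝ≥0∞)) ^ (N - n) * ((N.choose n : ℕ) : ℝ≥0∞)
        else 0 := by
  rw [PMF.map_apply]
  split_ifs with h
  · rw [tsum_eq_single (⟨n, Nat.lt_succ_of_le h⟩ : Fin (N + 1))]
    · rw [if_pos rfl, PMF.binomial_apply]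
      simp
    · intro i hi
      rw [if_neg]
      intro hni
      exact hi (Fin.ext hni.symm)
  · refine ENNReal.tsum_eq_zero.2 fun i => ?_
    rw [if_neg]
    intro hni
    exact h (hni ▸ Nat.lt_succ_iff.1 i.2)

/-- For a uniform random function `h : X → Y` and fixed `x₀ : X`, `y₀ : Y`:
(i) the number of points `x ≠ x₀` with `h x = y₀` is distributed as `B(#X - 1, 1/#Y)`, and
(ii) this count is independent of the random variable `h x₀`. -/
theorem punctured_preimageCount_binomial_indep {X Y : Type*} [Fintype X] [DecidableEq X] [Nonempty X]
    [Fintype Y] [Nonempty Y] (x₀ : X) (y₀ : Y) :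
    ((PMF.uniformOfFintype (X → Y)).map
        (fun h => Nat.card {x : X // x ≠ x₀ ∧ h x = y₀})
      = (PMF.binomial ((Fintype.card Y : NNReal))⁻¹
          (inv_le_one_of_one_le₀ (by exact_mod_cast Fintype.card_pos))
          (Fintype.card X - 1)).map Fin.val)
    ∧ @ProbabilityTheory.IndepFun (X → Y) ℕ Y ⊤ ⊤ ⊤
        (fun h => Nat.card {x : X // x ≠ x₀ ∧ h x = y₀})
        (fun h => h x₀)
        (@PMF.toMeasure (X → Y) ⊤ (PMF.uniformOfFintype (X → Y))) := by
  classical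
  have hm : 0 < Fintype.card Y := Fintype.card_pos
  have hm1 : 1 ≤ Fintype.card Y := hm
  have hcX : Fintype.card X = (Fintype.card X - 1) + 1 := by
    have := Fintype.card_pos (α := X); omega
  have hZ : Fintype.card {j : X // j ≠ x₀} = Fintype.card X - 1 := by
    have h1 := Fintype.card_subtype_compl (fun j : X => j = x₀)
    rw [Fintype.card_subtype_eq] at h1
    exact (Fintype.card_congr (Equiv.subtypeEquivRight fun _ => Iff.rfl)).trans h1
  have hcard_fun : Fintype.card (X → Y) = Fintype.card Y ^ (Fintype.card X - 1 + 1) := by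
    rw [Fintype.card_fun, ← hcX]
  have hNZ : Nat.card ({j : X // j ≠ x₀} → Y) = Fintype.card Y ^ (Fintype.card X - 1) := by
    rw [Nat.card_eq_fintype_card, Fintype.card_fun, hZ]
  have hrel : ∀ h : X → Y,
      Nat.card {x : X // x ≠ x₀ ∧ h x = y₀}
        = Nat.card {z : {j : X // j ≠ x₀} // ((Equiv.funSplitAt x₀ Y h).2 z = y₀)} := by
    intro h
    exact (Nat.card_congr (Equiv.subtypeSubtypeEquivSubtypeInter
      (fun j : X => j ≠ x₀) (fun x => h x = y₀))).symm
  have hfact : ∀ (P : ({j : X // j ≠ x₀} → Y) → Prop) (Q : Y → Prop),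
      Nat.card {h : X → Y // P (Equiv.funSplitAt x₀ Y h).2 ∧ Q (Equiv.funSplitAt x₀ Y h).1}
        = Nat.card {y : Y // Q y} * Nat.card {g : {j : X // j ≠ x₀} → Y // P g} := by
    intro P Q
    have e1 : {h : X → Y // P (Equiv.funSplitAt x₀ Y h).2 ∧ Q (Equiv.funSplitAt x₀ Y h).1}
        ≃ {p : Y × ({j : X // j ≠ x₀} → Y) // P p.2 ∧ Q p.1} :=
      (Equiv.funSplitAt x₀ Y).subtypeEquiv (fun h => Iff.rfl)
    have e2 : {p : Y × ({j : X // j ≠ x₀} → Y) // P p.2 ∧ Q p.1}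
        ≃ {y : Y // Q y} × {g : {j : X // j ≠ x₀} → Y // P g} :=
      (Equiv.subtypeEquivRight (fun p => and_comm)).trans Equiv.subtypeProdEquivProd
    rw [Nat.card_congr (e1.trans e2), Nat.card_prod]
  have hcardYtrue : Nat.card {y : Y // True} = Fintype.card Y := by
    rw [Nat.card_congr (Equiv.subtypeUnivEquiv (fun y : Y => trivial)), Nat.card_eq_fintype_card]
  have hfactP : ∀ (P : ({j : X // j ≠ x₀} → Y) → Prop),
      Nat.card {h : X → Y // P (Equiv.funSplitAt x₀ Y h).2}
        = Fintype.card Y * Nat.card {g : {j : X // j ≠ x₀} → Y // P g} := by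
    intro P
    calc Nat.card {h : X → Y // P (Equiv.funSplitAt x₀ Y h).2}
        = Nat.card {h : X → Y // P (Equiv.funSplitAt x₀ Y h).2
            ∧ (fun _ : Y => True) (Equiv.funSplitAt x₀ Y h).1} :=
          Nat.card_congr (Equiv.subtypeEquivRight fun h => (and_iff_left trivial).symm)
      _ = Nat.card {y : Y // True} * Nat.card {g : {j : X // j ≠ x₀} → Y // P g} :=
          hfact P (fun _ => True)
      _ = Fintype.card Y * Nat.card {g : {j : X // j ≠ x₀} → Y // P g} := by rw [hcardYtrue]
  have hcount : ∀ n : ℕ,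
      Nat.card {h : X → Y // Nat.card {x : X // x ≠ x₀ ∧ h x = y₀} = n}
        = Fintype.card Y * ((Fintype.card X - 1).choose n
            * (Fintype.card Y - 1) ^ (Fintype.card X - 1 - n)) := by
    intro n
    have key := hfactP (fun g : {j : X // j ≠ x₀} → Y => Nat.card {z // g z = y₀} = n)
    rw [aux_card_count y₀ n, hZ] at key
    rw [← key]
    exact Nat.card_congr (Equiv.subtypeEquivRight (fun h => by rw [hrel h]))
  have hm0 : (Fintype.card Y : ℝ≥0∞) ≠ 0 := by exact_mod_cast hm.ne'
  have hmtop : (Fintype.card Y : ℝ≥0∞) ≠ ∞ := ENNReal.natCast_ne_top _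
  have him : (Fintype.card Y : ℝ≥0∞) * (Fintype.card Y : ℝ≥0∞)⁻¹ = 1 :=
    ENNReal.mul_inv_cancel hm0 hmtop
  constructor
  · -- distribution
    ext n
    rw [aux_uniform_map_apply, aux_binomial_map_apply, hcount n, hcard_fun]
    rw [ENNReal.coe_inv (Nat.cast_ne_zero.mpr hm.ne' : ((Fintype.card Y : NNReal)) ≠ 0),
      ENNReal.coe_natCast]
    by_cases h : n ≤ Fintype.card X - 1
    · rw [if_pos h]
      obtain ⟨k, hk⟩ : ∃ k, Fintype.card X - 1 = n + k := ⟨Fintype.card X - 1 - n, by omega⟩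
      rw [hk]
      have hsum : ((Fintype.card Y : ℝ≥0∞) - 1) * (Fintype.card Y : ℝ≥0∞)⁻¹
          + (Fintype.card Y : ℝ≥0∞)⁻¹ = 1 := by
        rw [← add_one_mul,
          tsub_add_cancel_of_le (by exact_mod_cast hm1 : (1 : ℝ≥0∞) ≤ (Fintype.card Y : ℝ≥0∞)),
          him]
      have h1m : (1 : ℝ≥0∞) - (Fintype.card Y : ℝ≥0∞)⁻¹
          = ((Fintype.card Y : ℝ≥0∞) - 1) * (Fintype.card Y : ℝ≥0∞)⁻¹ :=
        ENNReal.sub_eq_of_eq_add (ENNReal.inv_ne_top.2 hm0) hsum.symm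
      simp only [Nat.add_sub_cancel_left]
      push_cast [Nat.cast_sub hm1]
      rw [h1m, mul_pow, ENNReal.inv_pow]
      calc (Fintype.card Y : ℝ≥0∞) * (((n + k).choose n : ℝ≥0∞)
              * ((Fintype.card Y : ℝ≥0∞) - 1) ^ k) * ((Fintype.card Y : ℝ≥0∞)⁻¹) ^ (n + k + 1)
          = ((Fintype.card Y : ℝ≥0∞) * (Fintype.card Y : ℝ≥0∞)⁻¹)
              * (((Fintype.card Y : ℝ≥0∞) - 1) ^ k * ((Fintype.card Y : ℝ≥0∞)⁻¹) ^ k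
                * (((Fintype.card Y : ℝ≥0∞)⁻¹) ^ n * ((n + k).choose n : ℝ≥0∞))) := by
            ring
        _ = ((Fintype.card Y : ℝ≥0∞)⁻¹) ^ n
              * (((Fintype.card Y : ℝ≥0∞) - 1) ^ k * ((Fintype.card Y : ℝ≥0∞)⁻¹) ^ k)
              * ((n + k).choose n : ℝ≥0∞) := by
            rw [him]; ring

    · rw [if_neg h, Nat.choose_eq_zero_of_lt (by omega)]
      simp
  · -- independence
    refine (ProbabilityTheory.indepFun_iff_measure_inter_preimage_eq_mul).mpr fun s t _ _ => ?_
    rw [aux_uniform_toMeasure_apply, aux_uniform_toMeasure_apply, aux_uniform_toMeasure_apply]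
    have h1 : Nat.card ((fun h : X → Y => Nat.card {x : X // x ≠ x₀ ∧ h x = y₀}) ⁻¹' s
          ∩ (fun h : X → Y => h x₀) ⁻¹' t : Set (X → Y))
        = Nat.card {y : Y // y ∈ t}
            * Nat.card {g : {j : X // j ≠ x₀} → Y // Nat.card {z // g z = y₀} ∈ s} := by
      rw [← hfact (fun g : {j : X // j ≠ x₀} → Y => Nat.card {z // g z = y₀} ∈ s)
        (fun y => y ∈ t)]
      refine Nat.card_congr (Equiv.subtypeEquivRight fun h => ?_)
      have he1 : (Equiv.funSplitAt x₀ Y h).1 = h x₀ := rfl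
      simp only [Set.mem_inter_iff, Set.mem_preimage, hrel h, he1]
    have h2 : Nat.card ((fun h : X → Y => Nat.card {x : X // x ≠ x₀ ∧ h x = y₀}) ⁻¹' s
          : Set (X → Y))
        = Fintype.card Y
            * Nat.card {g : {j : X // j ≠ x₀} → Y // Nat.card {z // g z = y₀} ∈ s} := by
      rw [← hfactP (fun g : {j : X // j ≠ x₀} → Y => Nat.card {z // g z = y₀} ∈ s)]
      refine Nat.card_congr (Equiv.subtypeEquivRight fun h => ?_)
      simp only [Set.mem_preimage, hrel h]
    have h3 : Nat.card ((fun h : X → Y => h x₀) ⁻¹' t : Set (X → Y))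
        = Nat.card {y : Y // y ∈ t} * Fintype.card Y ^ (Fintype.card X - 1) := by
      have key := hfact (fun _ : {j : X // j ≠ x₀} → Y => True) (fun y => y ∈ t)
      rw [Nat.card_congr (Equiv.subtypeUnivEquiv (fun g : {j : X // j ≠ x₀} → Y => trivial)),
        hNZ] at key
      rw [← key]
      refine Nat.card_congr (Equiv.subtypeEquivRight fun h => ?_)
      have he1 : (Equiv.funSplitAt x₀ Y h).1 = h x₀ := rfl
      simp [he1, Set.mem_preimage]
    rw [h1, h2, h3, hcard_fun]
    have hpowinv : ((Fintype.card Y : ℝ≥0∞) ^ (Fintype.card X - 1 + 1))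
        * ((Fintype.card Y : ℝ≥0∞) ^ (Fintype.card X - 1 + 1))⁻¹ = 1 :=
      ENNReal.mul_inv_cancel (pow_ne_zero _ hm0) (ENNReal.pow_ne_top hmtop)
    push_cast
    symm
    calc (Fintype.card Y : ℝ≥0∞)
            * (Nat.card {g : {j : X // j ≠ x₀} → Y // Nat.card {z // g z = y₀} ∈ s} : ℝ≥0∞)
            * ((Fintype.card Y : ℝ≥0∞) ^ (Fintype.card X - 1 + 1))⁻¹
          * ((Nat.card {y : Y // y ∈ t} : ℝ≥0∞) * (Fintype.card Y : ℝ≥0∞) ^ (Fintype.card X - 1)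
            * ((Fintype.card Y : ℝ≥0∞) ^ (Fintype.card X - 1 + 1))⁻¹)
        = ((Fintype.card Y : ℝ≥0∞) ^ (Fintype.card X - 1 + 1)
              * ((Fintype.card Y : ℝ≥0∞) ^ (Fintype.card X - 1 + 1))⁻¹)
            * ((Nat.card {y : Y // y ∈ t} : ℝ≥0∞)
              * (Nat.card {g : {j : X // j ≠ x₀} → Y // Nat.card {z // g z = y₀} ∈ s} : ℝ≥0∞)
              * ((Fintype.card Y : ℝ≥0∞) ^ (Fintype.card X - 1 + 1))⁻¹) := by
          ring
      _ = (Nat.card {y : Y // y ∈ t} : ℝ≥0∞)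
            * (Nat.card {g : {j : X // j ≠ x₀} → Y // Nat.card {z // g z = y₀} ∈ s} : ℝ≥0∞)
            * ((Fintype.card Y : ℝ≥0∞) ^ (Fintype.card X - 1 + 1))⁻¹ := by
          rw [hpowinv, one_mul]
end

section
/- Let ℓ ≥ 1 and k₂ ≥ 1 be natural numbers, let h be a uniform random function from Fin(2^ℓ) to Fin(2^{k₂}), and let x be a uniformly distributed random element of Fin(2^ℓ) chosen independently of h. Then the probability (over the joint choice of h and x) that there exists x' ∈ Fin(2^ℓ) with x' ≠ x and h(x') = h(x) is at least 1 − exp((1 − 2^ℓ)/2^{k₂}). -/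
/-- Number of functions `h` with no collision at a fixed point `x`. -/
lemma count_fix (N M : ℕ) (x : Fin N) :
    Nat.card {h : Fin N → Fin M // ∀ x', x' ≠ x → h x' ≠ h x}
      = M * (M - 1) ^ (N - 1) := by
  classical
  have e1 : {h : Fin N → Fin M // ∀ x', x' ≠ x → h x' ≠ h x}
      ≃ {p : Fin M × ({j : Fin N // j ≠ x} → Fin M) // ∀ j, p.2 j ≠ p.1} :=
    (Equiv.funSplitAt x (Fin M)).subtypeEquiv (by
      intro h
      constructor
      · intro H j; exact H j j.2
      · intro H x' hx'; exact H ⟨x', hx'⟩)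
  have e2 := Equiv.subtypeProdEquivSigmaSubtype
      (fun (y : Fin M) (g : {j : Fin N // j ≠ x} → Fin M) => ∀ j, g j ≠ y)
  have e3 : ∀ y : Fin M,
      {g : {j : Fin N // j ≠ x} → Fin M // ∀ j, g j ≠ y}
        ≃ ({j : Fin N // j ≠ x} → {z : Fin M // z ≠ y}) :=
    fun y => Equiv.subtypePiEquivPi (p := fun _ z => z ≠ y)
  have cardne : ∀ y : Fin M, Fintype.card {z : Fin M // z ≠ y} = M - 1 := by
    intro y
    have := Fintype.card_subtype_compl (fun z : Fin M => z = y)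
    simpa [Fintype.card_subtype_eq] using this
  have cardj : Fintype.card {j : Fin N // j ≠ x} = N - 1 := by
    have := Fintype.card_subtype_compl (fun j : Fin N => j = x)
    simpa [Fintype.card_subtype_eq] using this
  rw [Nat.card_eq_fintype_card, Fintype.card_congr (e1.trans e2), Fintype.card_sigma]
  have : ∀ y : Fin M, Fintype.card {g : {j : Fin N // j ≠ x} → Fin M // ∀ j, g j ≠ y}
      = (M - 1) ^ (N - 1) := by
    intro y
    rw [Fintype.card_congr (e3 y), Fintype.card_fun, cardne, cardj]
  rw [Finset.sum_congr rfl fun y _ => this y]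
  simp

/-- Number of pairs `(h, x)` such that `x` has no second preimage under `h`. -/
lemma count_compl (N M : ℕ) :
    Nat.card {p : (Fin N → Fin M) × Fin N //
        ¬ ∃ x' : Fin N, x' ≠ p.2 ∧ p.1 x' = p.1 p.2}
      = N * (M * (M - 1) ^ (N - 1)) := by
  classical
  have e1 : {p : (Fin N → Fin M) × Fin N // ¬ ∃ x' : Fin N, x' ≠ p.2 ∧ p.1 x' = p.1 p.2}
      ≃ {q : Fin N × (Fin N → Fin M) // ∀ x', x' ≠ q.1 → q.2 x' ≠ q.2 q.1} :=
    (Equiv.prodComm _ _).subtypeEquiv (by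
      intro p
      push_neg
      rfl)
  have e2 := Equiv.subtypeProdEquivSigmaSubtype
      (fun (x : Fin N) (h : Fin N → Fin M) => ∀ x', x' ≠ x → h x' ≠ h x)
  rw [Nat.card_eq_fintype_card, Fintype.card_congr (e1.trans e2), Fintype.card_sigma]
  have : ∀ x : Fin N,
      Fintype.card {h : Fin N → Fin M // ∀ x', x' ≠ x → h x' ≠ h x}
        = M * (M - 1) ^ (N - 1) := by
    intro x
    rw [← Nat.card_eq_fintype_card, count_fix N M x]
  rw [Finset.sum_congr rfl fun x _ => this x]
  simp

/-- For a uniform random function `h : Fin (2^ℓ) → Fin (2^k₂)` together with an independent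
uniform random point `x`, the probability that `x` has a second preimage is at least
`1 - exp((1 - 2^ℓ)/2^k₂)`. -/
theorem collisionOracle_success_prob (ℓ k₂ : ℕ) (hℓ : 1 ≤ ℓ) (hk : 1 ≤ k₂) :
    1 - Real.exp ((1 - (2 : ℝ) ^ ℓ) / 2 ^ k₂)
      ≤ unifPr (fun hx : (Fin (2 ^ ℓ) → Fin (2 ^ k₂)) × Fin (2 ^ ℓ) =>
          ∃ x' : Fin (2 ^ ℓ), x' ≠ hx.2 ∧ hx.1 x' = hx.1 hx.2) := by
  classical
  set N := 2 ^ ℓ with hN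
  set M := 2 ^ k₂ with hMdef
  have hM1 : 1 ≤ M := Nat.one_le_two_pow
  have hN1 : 1 ≤ N := Nat.one_le_two_pow
  obtain ⟨n, hn⟩ : ∃ n, N = n + 1 := ⟨N - 1, (Nat.succ_pred_eq_of_pos hN1).symm⟩
  set P : (Fin N → Fin M) × Fin N → Prop :=
    fun hx => ∃ x' : Fin N, x' ≠ hx.2 ∧ hx.1 x' = hx.1 hx.2 with hP
  have hC : Nat.card {p // ¬ P p} = N * (M * (M - 1) ^ n) := by
    have := count_compl N M
    simpa [hP, hn] using this
  have htot : Fintype.card ((Fin N → Fin M) × Fin N) = M ^ N * N := by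
    simp [Fintype.card_fun]
  have hsplit : Nat.card {p // P p} = M ^ N * N - N * (M * (M - 1) ^ n) := by
    have hle := Fintype.card_subtype_le P
    rw [Nat.card_eq_fintype_card, ← htot, ← hC, Nat.card_eq_fintype_card,
      Fintype.card_subtype_compl]
    omega
  have hCle : N * (M * (M - 1) ^ n) ≤ M ^ N * N := by
    rw [← hC, ← htot, Nat.card_eq_fintype_card]
    exact Fintype.card_subtype_le _
  have hm1 : (1 : ℝ) ≤ (M : ℝ) := by exact_mod_cast hM1
  have hm0 : (0 : ℝ) < (M : ℝ) := by positivity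
  have hcast : ((M - 1 : ℕ) : ℝ) = (M : ℝ) - 1 := by
    have := Nat.cast_sub (R := ℝ) hM1
    simpa using this
  have hPr : unifPr P = 1 - (1 - 1 / (M : ℝ)) ^ n := by
    rw [unifPr, hsplit, htot, Nat.cast_sub hCle]
    have hmne : (M : ℝ) ≠ 0 := ne_of_gt hm0
    have hNne : (N : ℝ) ≠ 0 := by positivity
    rw [hn]
    push_cast [hcast]
    field_simp
    rw [div_pow, pow_succ]
    field_simp
  rw [hPr]
  have h1 : (0 : ℝ) ≤ 1 - 1 / (M : ℝ) := by
    have : 1 / (M : ℝ) ≤ 1 := by rw [div_le_one hm0]; exact hm1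
    linarith
  have h2 : 1 - 1 / (M : ℝ) ≤ Real.exp (-(1 / (M : ℝ))) := by
    have := Real.add_one_le_exp (-(1 / (M : ℝ)))
    linarith
  have h3 : (1 - 1 / (M : ℝ)) ^ n ≤ Real.exp (-(1 / (M : ℝ))) ^ n :=
    pow_le_pow_left₀ h1 h2 n
  have h4 : Real.exp (-(1 / (M : ℝ))) ^ n = Real.exp ((1 - (2 : ℝ) ^ ℓ) / 2 ^ k₂) := by
    rw [← Real.exp_nat_mul]
    congr 1
    have hNr : ((2 : ℝ) ^ ℓ) = (N : ℝ) := by rw [hN]; push_cast; ring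
    have hMr : ((2 : ℝ) ^ k₂) = (M : ℝ) := by rw [hMdef]; push_cast; ring
    rw [hNr, hMr, hn]
    push_cast
    field_simp
    ring
  have := h3.trans_eq h4
  linarith
end
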